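/- (Bounds of the trimmed L₂ error) Let Y be a nonempty finite set of points in ℝ³, let x₁, …, x_N ∈ ℝ³ be data points, let r₀, t₀ ∈ ℝ³, let σ_r, σ_t ≥ 0, and let 1 ≤ K ≤ N. For r, t ∈ ℝ³ define e_i(r, t) = min_{y ∈ Y} ‖exp([r]ₓ) x_i + t − y‖, and define the trimmed error E^{Tr}(r, t) as the minimum over all size-K subsets S of {1, …, N} of Σ_{i ∈ S} e_i(r, t)² (the sum of the K smallest squared residuals). Define γ_{r,i} = 2 sin(min(√3 σ_r / 2, π/2)) ‖x_i‖, γ_t = √3 σ_t, and the per-point lower bounds ℓ_i = max(e_i(r₀, t₀) − (γ_{r,i} + γ_t), 0). Then for every r in the cube of half side-length σ_r centered at r₀ and every t in the cube of half side-length σ_t centered at t₀: min over size-K subsets Q of {1, …, N} of Σ_{i ∈ Q} ℓ_i² ≤ E^{Tr}(r, t). -/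

import Mathlib

open Matrix Real

/-- The skew-symmetric cross-product matrix of a vector `r ∈ ℝ³`. -/
noncomputable def crossMat (r : EuclideanSpace ℝ (Fin 3)) : Matrix (Fin 3) (Fin 3) ℝ :=
  !![0, -r 2, r 1; r 2, 0, -r 0; -r 1, r 0, 0]

/-- The rotation matrix `R_r = exp([r]ₓ)` of an angle-axis vector `r ∈ ℝ³`. -/
noncomputable def rotOf (r : EuclideanSpace ℝ (Fin 3)) : Matrix (Fin 3) (Fin 3) ℝ :=
  NormedSpace.exp (crossMat r)

/-- Application of a `3 × 3` matrix to a vector of `ℝ³` (with the Euclidean norm). -/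
noncomputable def mApp (A : Matrix (Fin 3) (Fin 3) ℝ) (x : EuclideanSpace ℝ (Fin 3)) :
    EuclideanSpace ℝ (Fin 3) :=
  Matrix.toEuclideanLin A x

/-!
Rodrigues' formula identifies `rotOf a` with the conjugation `x ↦ q x q̄` by the unit quaternion
`q = exp (a / 2)`. For unit quaternions `q, p` and `w = Re (q̄ p)` one has
`‖p x p̄ - q x q̄‖² ≤ 4 (1 - w²) ‖x‖²`, and comparing the spherical law of cosines with the
Euclidean one shows `w ≥ cos (‖b - a‖ / 2)` for `q = exp (a / 2)`, `p = exp (b / 2)` and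
`‖b - a‖ ≤ π`. A cube of half side `σ` lies in the ball of radius `√3 σ` about its centre, so
`R_r xᵢ + t` is within `γ_{r,i} + γ_t` of `R_{r₀} xᵢ + t₀`. The closest-point distance is
`1`-Lipschitz, hence `ℓᵢ ≤ eᵢ(r, t)` for every `i`, and the trimmed sums inherit this inequality.
-/

open Quaternion

local notation "ℝ³" => EuclideanSpace ℝ (Fin 3)

theorem exp_smul_eq_of_pow_three_eq_neg {A : Type*} [NormedRing A] [NormedAlgebra ℝ A]
    [CompleteSpace A] {P : A} (hP : P ^ 3 = -P) (θ : ℝ) :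
    NormedSpace.exp (θ • P) = 1 + sin θ • P + (1 - cos θ) • P ^ 2 := by
  set G : ℝ → A := fun t => 1 + sin t • P + (1 - cos t) • P ^ 2
  have hG : ∀ t, HasDerivAt G (P * G t) t := by
    intro t
    have hPG : P * G t = cos t • P + sin t • P ^ 2 := by
      have hP3 : P * P ^ 2 = -P := by rw [← pow_succ', hP]
      simp only [G, mul_add, mul_one, mul_smul_comm, hP3, ← sq]
      module
    rw [hPG]
    refine (((hasDerivAt_const t 1).add ((hasDerivAt_sin t).smul_const P)).add
      (((hasDerivAt_const t 1).sub (hasDerivAt_cos t)).smul_const (P ^ 2))).congr_deriv ?_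
    simp
  have hconst : ∀ t, NormedSpace.exp (t • -P) * G t = 1 := by
    have hderiv : ∀ t, HasDerivAt (fun t => NormedSpace.exp (t • -P) * G t) 0 t := by
      intro t
      refine ((hasDerivAt_exp_smul_const (-P) t).mul (hG t)).congr_deriv ?_
      rw [mul_assoc, neg_mul, mul_neg, neg_add_cancel]
    intro t
    rw [is_const_of_deriv_eq_zero (fun s => (hderiv s).differentiableAt)
      (fun s => (hderiv s).deriv) t 0]
    simp [G]
  have hinv : NormedSpace.exp (θ • P) * NormedSpace.exp (θ • -P) = 1 := by
    have hball : ∀ y : A, y ∈ Metric.eball (0 : A) (NormedSpace.expSeries ℝ A).radius := by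
      simp [NormedSpace.expSeries_radius_eq_top]
    rw [← NormedSpace.exp_add_of_commute_of_mem_ball
      (((Commute.refl P).neg_right.smul_left θ).smul_right θ) (hball _) (hball _)]
    simp
  calc NormedSpace.exp (θ • P)
      = NormedSpace.exp (θ • P) * (NormedSpace.exp (θ • -P) * G θ) := by rw [hconst, mul_one]
    _ = G θ := by rw [← mul_assoc, hinv, one_mul]

theorem EuclideanSpace.norm_le_sqrt_card_mul {ι : Type*} [Fintype ι] {u : EuclideanSpace ℝ ι}
    {σ : ℝ} (h : ∀ k, |u k| ≤ σ) : ‖u‖ ≤ √(Fintype.card ι) * σ := by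
  rcases isEmpty_or_nonempty ι with hι | ⟨⟨k⟩⟩
  · simp [EuclideanSpace.norm_eq]
  have hσ : 0 ≤ σ := (abs_nonneg _).trans (h k)
  rw [EuclideanSpace.norm_eq, ← sqrt_sq hσ, ← sqrt_mul (Nat.cast_nonneg _)]
  refine sqrt_le_sqrt ?_
  calc ∑ i, ‖u i‖ ^ 2 ≤ ∑ _i : ι, σ ^ 2 :=
        Finset.sum_le_sum fun i _ => pow_le_pow_left₀ (norm_nonneg _) (h i) 2
    _ = Fintype.card ι * σ ^ 2 := by simp

theorem Finset.inf'_norm_sub_le_add_norm_sub {E : Type*} [SeminormedAddCommGroup E]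
    (Y : Finset E) (hY : Y.Nonempty) (p q : E) :
    Y.inf' hY (fun y => ‖p - y‖) ≤ Y.inf' hY (fun y => ‖q - y‖) + ‖p - q‖ := by
  obtain ⟨y, hy, hq⟩ := Y.exists_mem_eq_inf' hY (fun y => ‖q - y‖)
  rw [hq]
  calc Y.inf' hY (fun y => ‖p - y‖) ≤ ‖p - y‖ := Y.inf'_le _ hy
    _ ≤ ‖p - q‖ + ‖q - y‖ := norm_sub_le_norm_sub_add_norm_sub p q y
    _ = ‖q - y‖ + ‖p - q‖ := add_comm _ _

lemma norm_sq_fin_three (v : ℝ³) : ‖v‖ ^ 2 = v 0 ^ 2 + v 1 ^ 2 + v 2 ^ 2 := by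
  simp [EuclideanSpace.norm_sq_eq, Fin.sum_univ_three]

lemma ext_fin_three {v w : ℝ³} (h₀ : v 0 = w 0) (h₁ : v 1 = w 1) (h₂ : v 2 = w 2) : v = w := by
  ext i
  fin_cases i <;> assumption

lemma mApp_apply (A : Matrix (Fin 3) (Fin 3) ℝ) (x : ℝ³) (i : Fin 3) :
    mApp A x i = A i 0 * x 0 + A i 1 * x 1 + A i 2 * x 2 := by
  simp [mApp, Matrix.toLpLin_apply, Matrix.mulVec, dotProduct, Fin.sum_univ_three]

lemma mApp_add (A B : Matrix (Fin 3) (Fin 3) ℝ) (x : ℝ³) :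
    mApp (A + B) x = mApp A x + mApp B x := by
  simp [mApp]

lemma mApp_smul (c : ℝ) (A : Matrix (Fin 3) (Fin 3) ℝ) (x : ℝ³) :
    mApp (c • A) x = c • mApp A x := by
  simp [mApp]

lemma mApp_mul (A B : Matrix (Fin 3) (Fin 3) ℝ) (x : ℝ³) :
    mApp (A * B) x = mApp A (mApp B x) := by
  simp [mApp, Matrix.toLpLin_apply, Matrix.mulVec_mulVec]

lemma mApp_one (x : ℝ³) : mApp 1 x = x := by
  simp [mApp]

lemma mApp_crossMat (v x : ℝ³) : mApp (crossMat v) x =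
    WithLp.toLp 2 ![v 1 * x 2 - v 2 * x 1, v 2 * x 0 - v 0 * x 2, v 0 * x 1 - v 1 * x 0] := by
  refine ext_fin_three ?_ ?_ ?_ <;> simp [mApp_apply, crossMat, sub_eq_add_neg, add_comm]

lemma crossMat_smul (c : ℝ) (v : ℝ³) : crossMat (c • v) = c • crossMat v := by
  ext i j
  fin_cases i <;> fin_cases j <;> simp [crossMat]

lemma crossMat_pow_three (v : ℝ³) : crossMat v ^ 3 = -(‖v‖ ^ 2 • crossMat v) := by
  rw [norm_sq_fin_three]
  ext i j
  fin_cases i <;> fin_cases j <;>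
    simp only [crossMat, pow_succ, pow_zero, one_mul, Matrix.mul_apply, Fin.sum_univ_three,
      Matrix.neg_apply, Matrix.smul_apply, Matrix.of_apply, Matrix.cons_val, smul_eq_mul,
      Fin.zero_eta, Fin.mk_one, Fin.reduceFinMk] <;>
    ring

lemma rotOf_smul_of_norm_eq_one {u : ℝ³} (hu : ‖u‖ = 1) (θ : ℝ) :
    rotOf (θ • u) = 1 + sin θ • crossMat u + (1 - cos θ) • crossMat u ^ 2 := by
  -- `NormedSpace.exp` only sees the topology, so any Banach-algebra norm on matrices will do
  let _ : NormedRing (Matrix (Fin 3) (Fin 3) ℝ) := Matrix.linftyOpNormedRing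
  let _ : NormedAlgebra ℝ (Matrix (Fin 3) (Fin 3) ℝ) := Matrix.linftyOpNormedAlgebra
  have hP : crossMat u ^ 3 = -crossMat u := by
    rw [crossMat_pow_three, hu, one_pow, one_smul]
  rw [rotOf, crossMat_smul, ← exp_smul_eq_of_pow_three_eq_neg hP]
  rfl

def pureQuat (x : ℝ³) : ℍ[ℝ] := ⟨0, x 0, x 1, x 2⟩

noncomputable def quatAct (q : ℍ[ℝ]) (x : ℝ³) : ℝ³ :=
  WithLp.toLp 2 ![(q * pureQuat x * star q).imI, (q * pureQuat x * star q).imJ,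
    (q * pureQuat x * star q).imK]

section

variable (q : ℍ[ℝ]) (x : ℝ³)

@[simp] lemma pureQuat_re : (pureQuat x).re = 0 := rfl
@[simp] lemma pureQuat_imI : (pureQuat x).imI = x 0 := rfl
@[simp] lemma pureQuat_imJ : (pureQuat x).imJ = x 1 := rfl
@[simp] lemma pureQuat_imK : (pureQuat x).imK = x 2 := rfl

lemma quatAct_apply_zero : quatAct q x 0 = (q * pureQuat x * star q).imI := rfl
lemma quatAct_apply_one : quatAct q x 1 = (q * pureQuat x * star q).imJ := rfl
lemma quatAct_apply_two : quatAct q x 2 = (q * pureQuat x * star q).imK := rfl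

end

set_option maxRecDepth 10000 in
/-- Expanded from `⟪q x q̄, p x p̄⟫ = ⟪x, s x s̄⟫`, `s = q̄ p`. -/
lemma norm_quatAct_sub_sq_add (q p : ℍ[ℝ]) (x : ℝ³) :
    ‖quatAct p x - quatAct q x‖ ^ 2
        + 4 * ((star q * p).imI * x 0 + (star q * p).imJ * x 1 + (star q * p).imK * x 2) ^ 2
      = ((normSq p + normSq q) ^ 2 - 4 * (star q * p).re ^ 2) * ‖x‖ ^ 2 := by
  simp only [norm_sq_fin_three, normSq_def', PiLp.sub_apply, quatAct_apply_zero,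
    quatAct_apply_one, quatAct_apply_two, pureQuat_re, pureQuat_imI, pureQuat_imJ, pureQuat_imK,
    re_mul, imI_mul, imJ_mul, imK_mul, re_star, imI_star, imJ_star, imK_star]
  ring

/-- `exp (a / 2)` in `ℍ`, written with the axis `‖a‖⁻¹ • a` (which is `0` when `a = 0`). -/
noncomputable def expQuat (a : ℝ³) : ℍ[ℝ] :=
  ⟨cos (‖a‖ / 2), sin (‖a‖ / 2) * (‖a‖⁻¹ • a) 0, sin (‖a‖ / 2) * (‖a‖⁻¹ • a) 1,
    sin (‖a‖ / 2) * (‖a‖⁻¹ • a) 2⟩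

section

variable (a : ℝ³)

@[simp] lemma expQuat_re : (expQuat a).re = cos (‖a‖ / 2) := rfl
@[simp] lemma expQuat_imI : (expQuat a).imI = sin (‖a‖ / 2) * (‖a‖⁻¹ • a) 0 := rfl
@[simp] lemma expQuat_imJ : (expQuat a).imJ = sin (‖a‖ / 2) * (‖a‖⁻¹ • a) 1 := rfl
@[simp] lemma expQuat_imK : (expQuat a).imK = sin (‖a‖ / 2) * (‖a‖⁻¹ • a) 2 := rfl

end

theorem mApp_rotOf_eq_quatAct (a x : ℝ³) : mApp (rotOf a) x = quatAct (expQuat a) x := by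
  rcases eq_or_ne a 0 with rfl | ha
  · have h0 : crossMat 0 = 0 := by simpa using crossMat_smul 0 0
    refine ext_fin_three ?_ ?_ ?_ <;> simp [rotOf, h0, mApp_one, quatAct_apply_zero,
      quatAct_apply_one, quatAct_apply_two, re_mul, imI_mul, imJ_mul, imK_mul]
  set u : ℝ³ := ‖a‖⁻¹ • a with hu_def
  have hu1 : ‖u‖ = 1 := by simpa using norm_smul_inv_norm (𝕜 := ℝ) ha
  have hu : u 0 ^ 2 + u 1 ^ 2 + u 2 ^ 2 = 1 := by
    rw [← norm_sq_fin_three, hu1, one_pow]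
  have hau : a = ‖a‖ • u := (smul_inv_smul₀ (norm_ne_zero_iff.mpr ha) a).symm
  have hsin : sin ‖a‖ = 2 * sin (‖a‖ / 2) * cos (‖a‖ / 2) := by
    rw [← sin_two_mul, mul_div_cancel₀ _ two_ne_zero]
  have hcos : 1 - cos ‖a‖ = 2 * sin (‖a‖ / 2) ^ 2 := by
    nth_rw 1 [← mul_div_cancel₀ ‖a‖ two_ne_zero]
    rw [cos_two_mul_eq_one_sub]
    ring
  rw [congrArg rotOf hau, rotOf_smul_of_norm_eq_one hu1, hsin, hcos, mApp_add, mApp_add, mApp_smul,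
    mApp_smul, sq (crossMat u), mApp_mul, mApp_one]
  have hsc := sin_sq_add_cos_sq (‖a‖ / 2)
  refine ext_fin_three ?_ ?_ ?_ <;>
    simp only [mApp_crossMat, quatAct_apply_zero, quatAct_apply_one, quatAct_apply_two, re_mul,
      imI_mul, imJ_mul, imK_mul, re_star, imI_star, imJ_star, imK_star, pureQuat_re, pureQuat_imI,
      pureQuat_imJ, pureQuat_imK, expQuat_re, expQuat_imI, expQuat_imJ, expQuat_imK, ← hu_def,
      PiLp.add_apply, PiLp.smul_apply, smul_eq_mul, Matrix.cons_val]
  · linear_combination (-(x 0) * sin (‖a‖ / 2) ^ 2) * hu - x 0 * hsc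
  · linear_combination (-(x 1) * sin (‖a‖ / 2) ^ 2) * hu - x 1 * hsc
  · linear_combination (-(x 2) * sin (‖a‖ / 2) ^ 2) * hu - x 2 * hsc

lemma normSq_expQuat (a : ℝ³) : normSq (expQuat a) = 1 := by
  have h : sin (‖a‖ / 2) ^ 2 * ‖‖a‖⁻¹ • a‖ ^ 2 = sin (‖a‖ / 2) ^ 2 := by
    rcases eq_or_ne a 0 with rfl | ha
    · simp
    rw [show ‖‖a‖⁻¹ • a‖ = 1 by simpa using norm_smul_inv_norm (𝕜 := ℝ) ha, one_pow, mul_one]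
  rw [norm_sq_fin_three] at h
  simp only [normSq_def', expQuat_re, expQuat_imI, expQuat_imJ, expQuat_imK]
  linear_combination h + cos_sq_add_sin_sq (‖a‖ / 2)

lemma re_star_expQuat_mul_expQuat (a b : ℝ³) :
    (star (expQuat a) * expQuat b).re = cos (‖a‖ / 2) * cos (‖b‖ / 2)
      + inner ℝ (‖a‖⁻¹ • a) (‖b‖⁻¹ • b) * (sin (‖a‖ / 2) * sin (‖b‖ / 2)) := by
  simp only [re_mul, re_star, imI_star, imJ_star, imK_star, expQuat_re, expQuat_imI, expQuat_imJ,
    expQuat_imK, PiLp.inner_apply, Fin.sum_univ_three, RCLike.inner_apply, conj_trivial]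
  ring

theorem mul_abs_sin_le_mul_sin {p A : ℝ} (hp : 0 ≤ p) (hpA : p ≤ A) (hpπ : p ≤ π / 2) :
    p * |sin A| ≤ A * sin p := by
  rcases le_or_gt A π with hAπ | hAπ
  · rcases hp.eq_or_lt with rfl | hp'
    · simp
    have hA : 0 < A := hp'.trans_le hpA
    rw [abs_of_nonneg (sin_nonneg_of_nonneg_of_le_pi hA.le hAπ)]
    have h := strictConcaveOn_sin_Icc.concaveOn.2 ⟨le_rfl, pi_pos.le⟩ ⟨hA.le, hAπ⟩
      (sub_nonneg.2 ((div_le_one hA).2 hpA)) (div_nonneg hp hA.le) (sub_add_cancel 1 (p / A))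
    simp only [smul_eq_mul, mul_zero, sin_zero, zero_add, div_mul_cancel₀ p hA.ne'] at h
    rw [div_mul_eq_mul_div, div_le_iff₀ hA] at h
    linarith
  · calc p * |sin A| ≤ p * 1 := mul_le_mul_of_nonneg_left (abs_sin_le_one A) hp
      _ ≤ π * (2 / π * p) := by field_simp; linarith
      _ ≤ A * sin p := mul_le_mul hAπ.le (mul_le_sin hp hpπ) (by positivity) (by linarith)

theorem mul_mul_sin_mul_sin_le {p q A B : ℝ} (hp : 0 ≤ p) (hq : 0 ≤ q) (hpA : p ≤ A)
    (hqB : q ≤ B) (hpπ : p ≤ π / 2) (hqπ : q ≤ π / 2) :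
    p * q * (sin A * sin B) ≤ A * B * (sin p * sin q) :=
  calc p * q * (sin A * sin B) ≤ p * q * (|sin A| * |sin B|) := by
        rw [← abs_mul]; exact mul_le_mul_of_nonneg_left (le_abs_self _) (mul_nonneg hp hq)
    _ = (p * |sin A|) * (q * |sin B|) := by ring
    _ ≤ (A * sin p) * (B * sin q) :=
        mul_le_mul (mul_abs_sin_le_mul_sin hp hpA hpπ) (mul_abs_sin_le_mul_sin hq hqB hqπ)
          (by positivity)
          (mul_nonneg (hp.trans hpA) (sin_nonneg_of_nonneg_of_le_pi hp (by linarith)))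
    _ = A * B * (sin p * sin q) := by ring

/-- With `p, q = (D ± (α - β)) / 2` one has `cos (α - β) - cos D = 2 sin p sin q` and
`2 p q = α β (1 - c)`, so the claim reduces to `mul_mul_sin_mul_sin_le`. -/
theorem cos_le_of_sq_eq_law_of_cosines {α β c D : ℝ} (hα : 0 ≤ α) (hβ : 0 ≤ β) (hc : |c| ≤ 1)
    (hD : 0 ≤ D) (hDπ : D ≤ π / 2) (hDsq : D ^ 2 = α ^ 2 + β ^ 2 - 2 * α * β * c) :
    cos D ≤ cos α * cos β + c * (sin α * sin β) := by
  obtain ⟨hc₁, hc₂⟩ := abs_le.1 hc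
  have hαβ := mul_nonneg hα hβ
  obtain ⟨hlo₁, hlo₂⟩ : -D ≤ α - β ∧ α - β ≤ D :=
    abs_le.1 (abs_le_of_sq_le_sq (by nlinarith) hD)
  have hhi : D ≤ α + β := (sq_le_sq₀ hD (by positivity)).1 (by nlinarith)
  set p := (D + (α - β)) / 2 with hp
  set q := (D - (α - β)) / 2 with hq
  have hsp : 0 ≤ sin p := sin_nonneg_of_nonneg_of_le_pi (by linarith) (by linarith)
  have hsq : 0 ≤ sin q := sin_nonneg_of_nonneg_of_le_pi (by linarith) (by linarith)
  have hcos : cos (α - β) - cos D = 2 * (sin p * sin q) := by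
    rw [cos_sub_cos, show (α - β - D) / 2 = -q by ring, show (α - β + D) / 2 = p by ring, sin_neg]
    ring
  have key : (1 - c) * (sin α * sin β) ≤ 2 * (sin p * sin q) := by
    rcases hαβ.eq_or_lt with h0 | hpos
    · obtain h | h := mul_eq_zero.1 h0.symm <;> simp [h, mul_nonneg hsp hsq]
    refine le_of_mul_le_mul_left ?_ hpos
    calc α * β * ((1 - c) * (sin α * sin β)) = 2 * (p * q * (sin α * sin β)) := by
          linear_combination (-(sin α * sin β) / 2) * hDsq
      _ ≤ 2 * (α * β * (sin p * sin q)) := mul_le_mul_of_nonneg_left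
          (mul_mul_sin_mul_sin_le (by linarith) (by linarith) (by linarith) (by linarith)
            (by linarith) (by linarith)) zero_le_two
      _ = α * β * (2 * (sin p * sin q)) := by ring
  have hsum : cos α * cos β + c * (sin α * sin β) = cos (α - β) - (1 - c) * (sin α * sin β) := by
    rw [cos_sub]; ring
  linarith

theorem cos_le_re_star_expQuat_mul_expQuat {a b : ℝ³} (h : ‖b - a‖ ≤ π) :
    cos (‖b - a‖ / 2) ≤ (star (expQuat a) * expQuat b).re := by
  have hsmul : ∀ v : ℝ³, ‖v‖ • ‖v‖⁻¹ • v = v := fun v => by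
    rcases eq_or_ne v 0 with rfl | hv
    · simp
    · exact smul_inv_smul₀ (norm_ne_zero_iff.mpr hv) v
  have hunit : ∀ v : ℝ³, ‖‖v‖⁻¹ • v‖ ≤ 1 := fun v => by
    rw [norm_smul, norm_inv, norm_norm]; exact inv_mul_le_one_of_le₀ le_rfl (norm_nonneg v)
  have hc : |inner ℝ (‖a‖⁻¹ • a) (‖b‖⁻¹ • b)| ≤ 1 :=
    (abs_real_inner_le_norm _ _).trans (mul_le_one₀ (hunit a) (norm_nonneg _) (hunit b))
  have hinner : inner ℝ a b = ‖a‖ * ‖b‖ * inner ℝ (‖a‖⁻¹ • a) (‖b‖⁻¹ • b) := by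
    conv_lhs => rw [← hsmul a, ← hsmul b]
    rw [real_inner_smul_left, real_inner_smul_right]; ring
  rw [re_star_expQuat_mul_expQuat]
  refine cos_le_of_sq_eq_law_of_cosines (by positivity) (by positivity) hc (by positivity)
    (by linarith) ?_
  linear_combination (norm_sub_sq_real b a) / 4 - hinner / 2 - real_inner_comm a b / 2

theorem norm_mApp_rotOf_sub_le {a b : ℝ³} {δ : ℝ} (hδ : ‖b - a‖ ≤ δ) (x : ℝ³) :
    ‖mApp (rotOf b) x - mApp (rotOf a) x‖ ≤ 2 * sin (min (δ / 2) (π / 2)) * ‖x‖ := by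
  set θ := min (δ / 2) (π / 2) with hθ
  have hθ₀ : 0 ≤ θ := le_min (by linarith [norm_nonneg (b - a)]) (by positivity)
  have hθπ : θ ≤ π / 2 := min_le_right _ _
  set w := (star (expQuat a) * expQuat b).re
  have hw : cos θ ^ 2 ≤ w ^ 2 := by
    rcases le_total (δ / 2) (π / 2) with h | h
    · rw [hθ, min_eq_left h]
      have hcos : cos (δ / 2) ≤ cos (‖b - a‖ / 2) :=
        cos_le_cos_of_nonneg_of_le_pi (by positivity) (by linarith [pi_pos]) (by linarith)
      exact pow_le_pow_left₀ (cos_nonneg_of_mem_Icc ⟨by linarith [pi_pos, norm_nonneg (b - a)], h⟩)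
        (hcos.trans (cos_le_re_star_expQuat_mul_expQuat (by linarith))) 2
    · rw [hθ, min_eq_right h, cos_pi_div_two]
      simpa using sq_nonneg w
  have hid := norm_quatAct_sub_sq_add (expQuat a) (expQuat b) x
  rw [normSq_expQuat, normSq_expQuat, ← mApp_rotOf_eq_quatAct, ← mApp_rotOf_eq_quatAct] at hid
  have hsq : ‖mApp (rotOf b) x - mApp (rotOf a) x‖ ^ 2 ≤ (2 * sin θ * ‖x‖) ^ 2 := by
    nlinarith [sin_sq_add_cos_sq θ, mul_le_mul_of_nonneg_right hw (sq_nonneg ‖x‖)]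
  have hsin : 0 ≤ sin θ := sin_nonneg_of_nonneg_of_le_pi hθ₀ (by linarith [pi_pos])
  exact (pow_le_pow_iff_left₀ (norm_nonneg _) (by positivity) two_ne_zero).1 hsq

theorem trimmed_l2_error_lower_bound
    (Y : Finset (EuclideanSpace ℝ (Fin 3))) (hY : Y.Nonempty)
    (N K : ℕ) (hKN : K ≤ N)
    (x : Fin N → EuclideanSpace ℝ (Fin 3))
    (r₀ t₀ : EuclideanSpace ℝ (Fin 3)) (σr σt : ℝ)
    (r t : EuclideanSpace ℝ (Fin 3))
    (hr : ∀ k, |r k - r₀ k| ≤ σr) (ht : ∀ k, |t k - t₀ k| ≤ σt) :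
    let e : Fin N → EuclideanSpace ℝ (Fin 3) → EuclideanSpace ℝ (Fin 3) → ℝ :=
      fun i r t => Y.inf' hY fun y => ‖mApp (rotOf r) (x i) + t - y‖
    let γr : Fin N → ℝ :=
      fun i => 2 * Real.sin (min (Real.sqrt 3 * σr / 2) (Real.pi / 2)) * ‖x i‖
    let γt : ℝ := Real.sqrt 3 * σt
    let ℓ : Fin N → ℝ := fun i => max (e i r₀ t₀ - (γr i + γt)) 0
    let hne : ((Finset.univ : Finset (Fin N)).powersetCard K).Nonempty :=
      Finset.powersetCard_nonempty.mpr (by simpa using hKN)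
    ((Finset.univ : Finset (Fin N)).powersetCard K).inf'
        hne (fun Q => ∑ i ∈ Q, (ℓ i) ^ 2)
      ≤ ((Finset.univ : Finset (Fin N)).powersetCard K).inf'
        hne (fun S => ∑ i ∈ S, (e i r t) ^ 2) := by
  intro e γr γt ℓ hne
  have hcube : ∀ {u v : ℝ³} {σ : ℝ}, (∀ k, |u k - v k| ≤ σ) → ‖u - v‖ ≤ √3 * σ := fun h => by
    simpa using EuclideanSpace.norm_le_sqrt_card_mul (u := _ - _) h
  have hℓ : ∀ i, ℓ i ≤ e i r t := fun i => by
    refine max_le ?_ (Finset.le_inf' hY _ fun y _ => norm_nonneg _)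
    have hdist := Finset.inf'_norm_sub_le_add_norm_sub Y hY (mApp (rotOf r₀) (x i) + t₀)
      (mApp (rotOf r) (x i) + t)
    rw [norm_sub_rev, add_sub_add_comm] at hdist
    have hsplit := norm_add_le (mApp (rotOf r) (x i) - mApp (rotOf r₀) (x i)) (t - t₀)
    have hrot := norm_mApp_rotOf_sub_le (hcube hr) (x i)
    have htr := hcube ht
    simp only [e, γr, γt] at hdist ⊢
    linarith
  exact Finset.inf'_mono_fun fun S _ => Finset.sum_le_sum fun i _ =>
    pow_le_pow_left₀ (le_max_right _ _) (hℓ i) 2
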